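/- For every integer n ≥ 1, the number of symmetric Dyck paths of semi-length n with exactly one valley is ⌊n/2⌋; that is, u(n,1) = ⌊n/2⌋. -/
import Mathlib


/-- A Dyck path of semi-length `n`, encoded as a list of booleans where
`true` is an up-step `U` and `false` is a down-step `D`: it has `2*n` steps,
`n` of them up-steps, and every prefix has at least as many `U`'s as `D`'s. -/
def IsDyckPath (n : ℕ) (p : List Bool) : Prop :=
  p.length = 2 * n ∧ p.count true = n ∧
    ∀ i, (p.take i).count false ≤ (p.take i).count true

/-- The number of valleys of a path: positions where a `D` step is
immediately followed by a `U` step. -/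
def valleys (p : List Bool) : ℕ :=
  (p.zip p.tail).count (false, true)

/-- A path is symmetric if reversing the sequence of steps and exchanging
`U` and `D` leaves it unchanged. -/
def IsSymmetric (p : List Bool) : Prop :=
  (p.reverse.map (fun b => !b)) = p

/-- `u n k` is the number of symmetric Dyck paths of semi-length `n`
with exactly `k` valleys. -/
noncomputable def u (n k : ℕ) : ℕ :=
  Set.ncard {p : List Bool | IsDyckPath n p ∧ IsSymmetric p ∧ valleys p = k}

open List

lemma valleys_nil : valleys ([] : List Bool) = 0 := rfl

lemma valleys_singleton (x : Bool) : valleys [x] = 0 := rfl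

lemma valleys_cons_cons (x y : Bool) (l : List Bool) :
    valleys (x :: y :: l) = (if (x, y) = ((false : Bool), (true : Bool)) then 1 else 0)
      + valleys (y :: l) := by
  simp only [valleys, List.tail_cons, List.zip_cons_cons, List.count_cons, beq_iff_eq]
  omega

lemma valleys_cons_true (l : List Bool) : valleys (true :: l) = valleys l := by
  cases l with
  | nil => rfl
  | cons y t => rw [valleys_cons_cons]; simp

lemma valleys_cons_false_false (l : List Bool) :
    valleys (false :: false :: l) = valleys (false :: l) := by
  rw [valleys_cons_cons]; simp

lemma valleys_false_true (l : List Bool) :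
    valleys (false :: true :: l) = valleys (true :: l) + 1 := by
  rw [valleys_cons_cons]; simp; omega

lemma valleys_rep_true (a : ℕ) (l : List Bool) :
    valleys (replicate a true ++ l) = valleys l := by
  induction a with
  | zero => simp
  | succ k ih => simpa [replicate_succ, valleys_cons_true] using ih

lemma valleys_rep_false (d : ℕ) : valleys (replicate d false) = 0 := by
  induction d with
  | zero => rfl
  | succ k ih =>
    cases k with
    | zero => rfl
    | succ j =>
      rw [show replicate (j + 1 + 1) (false : Bool) = false :: false :: replicate j false from rfl,
        valleys_cons_false_false]
      simpa [replicate_succ] using ih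

lemma valleys_rep_false_true (b : ℕ) (hb : 1 ≤ b) (l : List Bool) :
    valleys (replicate b false ++ true :: l) = valleys (true :: l) + 1 := by
  induction b with
  | zero => omega
  | succ k ih =>
    cases k with
    | zero => simpa using valleys_false_true l
    | succ j =>
      rw [show replicate (j + 1 + 1) (false : Bool) ++ true :: l
            = false :: false :: (replicate j false ++ true :: l) from by simp [replicate_succ],
        valleys_cons_false_false]
      have := ih (by omega)
      rw [show (false : Bool) :: (replicate j false ++ true :: l)
            = replicate (j + 1) false ++ true :: l from by simp [replicate_succ]]
      exact this

lemma eq_of_valleys_zero (p : List Bool) (h : valleys p = 0) :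
    ∃ a d, p = replicate a true ++ replicate d false := by
  induction p with
  | nil => exact ⟨0, 0, rfl⟩
  | cons x t ih =>
    cases x
    · cases t with
      | nil => exact ⟨0, 1, rfl⟩
      | cons y s =>
        cases y
        · have h' : valleys (false :: s) = 0 := by rwa [valleys_cons_false_false] at h
          obtain ⟨a, d, hd⟩ := ih h'
          cases a with
          | zero => exact ⟨0, d + 1, by simp [replicate_succ] at hd ⊢; simpa using hd⟩
          | succ a' => simp [replicate_succ] at hd
        · rw [valleys_false_true] at h; omega
    · have h' : valleys t = 0 := by rwa [valleys_cons_true] at h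
      obtain ⟨a, d, hd⟩ := ih h'
      exact ⟨a + 1, d, by simp [replicate_succ, hd]⟩

lemma eq_of_valleys_one (p : List Bool) (h : valleys p = 1) :
    ∃ a b c d, 1 ≤ b ∧ 1 ≤ c ∧
      p = replicate a true ++ replicate b false ++ replicate c true ++ replicate d false := by
  induction p with
  | nil => simp [valleys] at h
  | cons x t ih =>
    cases x
    · cases t with
      | nil => simp [valleys] at h
      | cons y s =>
        cases y
        · have h' : valleys (false :: s) = 1 := by rwa [valleys_cons_false_false] at h
          obtain ⟨a, b, c, d, hb, hc, hd⟩ := ih h'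
          cases a with
          | zero =>
            refine ⟨0, b + 1, c, d, by omega, hc, ?_⟩
            simp [replicate_succ] at hd ⊢
            simpa using hd
          | succ a' => simp [replicate_succ] at hd
        · rw [valleys_false_true, valleys_cons_true] at h
          have h0 : valleys s = 0 := by omega
          obtain ⟨c, d, hd⟩ := eq_of_valleys_zero s h0
          exact ⟨0, 1, c + 1, d, le_refl 1, by omega, by simp [replicate_succ, hd]⟩
    · have h' : valleys t = 1 := by rwa [valleys_cons_true] at h
      obtain ⟨a, b, c, d, hb, hc, hd⟩ := ih h'
      exact ⟨a + 1, b, c, d, hb, hc, by simp [replicate_succ, hd]⟩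

/-- The candidate symmetric one-valley path. -/
def spath (n b : ℕ) : List Bool :=
  replicate (n - b) true ++ replicate b false ++ replicate b true ++ replicate (n - b) false

lemma spath_mem (n b : ℕ) (hb1 : 1 ≤ b) (hb2 : b ≤ n / 2) :
    IsDyckPath n (spath n b) ∧ IsSymmetric (spath n b) ∧ valleys (spath n b) = 1 := by
  have hbn : 2 * b ≤ n := by omega
  refine ⟨⟨?_, ?_, ?_⟩, ?_, ?_⟩
  · simp [spath]; omega
  · simp [spath, List.count_append, List.count_replicate]; omega
  · intro i
    simp [spath, List.take_append, List.take_replicate, List.count_append,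
      List.count_replicate, List.length_replicate]
    omega
  · simp [IsSymmetric, spath, List.reverse_append, List.reverse_replicate, List.map_append,
      List.map_replicate]
  · obtain ⟨b', rfl⟩ : ∃ b', b = b' + 1 := ⟨b - 1, by omega⟩
    rw [show spath n (b' + 1) = replicate (n - (b' + 1)) true ++ (replicate (b' + 1) false ++
      (replicate (b' + 1) true ++ replicate (n - (b' + 1)) false)) from by
        simp [spath, List.append_assoc]]
    rw [valleys_rep_true,
      show replicate (b' + 1) (true : Bool) ++ replicate (n - (b' + 1)) false
        = true :: (replicate b' true ++ replicate (n - (b' + 1)) false) from by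
          simp [replicate_succ],
      valleys_rep_false_true _ (by omega), valleys_cons_true, valleys_rep_true,
      valleys_rep_false]

lemma set_eq (n : ℕ) (hn : 1 ≤ n) :
    {p : List Bool | IsDyckPath n p ∧ IsSymmetric p ∧ valleys p = 1}
      = spath n '' Set.Icc 1 (n / 2) := by
  ext p
  simp only [Set.mem_setOf_eq, Set.mem_image, Set.mem_Icc]
  constructor
  · rintro ⟨⟨hlen, hcount, hpref⟩, hsym, hv⟩
    obtain ⟨a, b, c, d, hb, hc, hd⟩ := eq_of_valleys_one p hv
    subst hd
    have h1 : a + (b + (c + d)) = 2 * n := by simpa using hlen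
    have h2 : a + c = n := by
      simpa [List.count_append, List.count_replicate] using hcount
    have h3 : b ≤ a := by
      have := hpref (a + b)
      simp [List.take_append, List.take_replicate, List.count_append,
        List.count_replicate, List.length_replicate] at this
      omega
    have hs : replicate d true ++ replicate c false ++ replicate b true ++ replicate a false
        = replicate a true ++ replicate b false ++ replicate c true ++ replicate d false := by
      have := hsym
      simp only [IsSymmetric, List.reverse_append, List.reverse_replicate, List.map_append,
        List.map_replicate, Bool.not_false, Bool.not_true, List.append_assoc] at this
      simpa [List.append_assoc] using this
    have e1 := congrArg (fun L => ((L.take a).count true)) hs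
    have e2 := congrArg (fun L => ((L.take d).count true)) hs
    simp only [List.take_append, List.take_replicate, List.count_append,
      List.count_replicate, List.length_replicate, if_pos, if_neg] at e1 e2
    simp at e1 e2
    have had : a = d := by omega
    have hbc : b = c := by omega
    refine ⟨b, ⟨hb, by omega⟩, ?_⟩
    have ha' : a = n - b := by omega
    have hc' : c = b := by omega
    have hd' : d = n - b := by omega
    rw [spath, ← ha', hc', show d = a by omega]
  · rintro ⟨b, ⟨hb1, hb2⟩, rfl⟩
    exact spath_mem n b hb1 hb2

lemma spath_injOn (n : ℕ) : Set.InjOn (spath n) (Set.Icc 1 (n / 2)) := by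
  intro x hx y hy h
  simp only [Set.mem_Icc] at hx hy
  have ex := congrArg (fun L => ((L.take n).count true)) h
  simp only [spath, List.take_append, List.take_replicate, List.count_append,
    List.count_replicate, List.length_replicate] at ex
  simp at ex
  omega

theorem u_one_valley (n : ℕ) (hn : 1 ≤ n) : u n 1 = n / 2 := by
  unfold u
  rw [set_eq n hn, Set.ncard_image_of_injOn (spath_injOn n), ← Finset.coe_Icc,
    Set.ncard_coe_finset, Nat.card_Icc]
  omega
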